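/- Define j(x) = (1 - cos x)/sin x for x ∈ (0, π). The function x ↦ j(x√2)/j(x) is strictly increasing on the interval (π/(2√2), π/2). -/

import Mathlib

open Real

/-- j(x) = (1 - cos x)/sin x. -/
noncomputable def j (x : ℝ) : ℝ := (1 - Real.cos x) / Real.sin x

lemma hasDerivAt_j (y : ℝ) (hs : Real.sin y ≠ 0) :
    HasDerivAt j ((1 - Real.cos y) / Real.sin y ^ 2) y := by
  have h1 : HasDerivAt (fun t => 1 - Real.cos t) (Real.sin y) y := by
    simpa using (Real.hasDerivAt_cos y).const_sub 1
  have h2 := h1.div (Real.hasDerivAt_sin y) hs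
  refine h2.congr_deriv ?_
  have := Real.sin_sq_add_cos_sq y
  rw [div_left_inj' (pow_ne_zero 2 hs)]
  nlinarith [this]

lemma j_pos (y : ℝ) (h0 : 0 < y) (hπ : y < π) : 0 < j y := by
  have hs : 0 < Real.sin y := Real.sin_pos_of_pos_of_lt_pi h0 hπ
  have hc : Real.cos y < 1 := by
    have := Real.cos_lt_cos_of_nonneg_of_le_pi (le_refl 0) hπ.le h0
    simpa using this
  exact div_pos (by linarith) hs

lemma key_ineq (x : ℝ) (hx : 0 < x) (hu : x * Real.sqrt 2 ≤ π) :
    Real.sin (x * Real.sqrt 2) < Real.sqrt 2 * Real.sin x := by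
  have h2 : (1:ℝ) < Real.sqrt 2 := by
    have : Real.sqrt 1 < Real.sqrt 2 := Real.sqrt_lt_sqrt (by norm_num) (by norm_num)
    simpa using this
  have h2' : (0:ℝ) < Real.sqrt 2 := by linarith
  set u := x * Real.sqrt 2 with hu_def
  have hu0 : 0 < u := by positivity
  have ha : (0:ℝ) < 1 - (Real.sqrt 2)⁻¹ := by
    have : (Real.sqrt 2)⁻¹ < 1 := by
      rw [inv_lt_one_iff₀]; right; exact h2
    linarith
  have hb : (0:ℝ) < (Real.sqrt 2)⁻¹ := by positivity
  have hc := strictConcaveOn_sin_Icc.2 (Set.mem_Icc.2 ⟨le_refl 0, Real.pi_pos.le⟩)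
      (Set.mem_Icc.2 ⟨hu0.le, hu⟩) (ne_of_lt hu0) ha hb (by ring)
  simp only [smul_eq_mul, Real.sin_zero, mul_zero, zero_add] at hc
  have hbx : (Real.sqrt 2)⁻¹ * u = x := by
    rw [hu_def]; field_simp
  rw [hbx] at hc
  have h := mul_lt_mul_of_pos_left hc h2'
  have hinv : Real.sqrt 2 * ((Real.sqrt 2)⁻¹ * Real.sin u) = Real.sin u := by
    field_simp
  rw [hinv] at h
  exact h

/-- x ↦ j(x√2)/j(x) is strictly increasing on (π/(2√2), π/2). -/
theorem stmt3 : StrictMonoOn (fun x => j (x * Real.sqrt 2) / j x)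
    (Set.Ioo (π / (2 * Real.sqrt 2)) (π / 2)) := by
  have h2 : (0:ℝ) < Real.sqrt 2 := by positivity
  have hlt2 : Real.sqrt 2 < 2 := by
    nlinarith [Real.sq_sqrt (by norm_num : (0:ℝ) ≤ 2)]
  have h1lt : (1:ℝ) < Real.sqrt 2 := by
    nlinarith [Real.sq_sqrt (by norm_num : (0:ℝ) ≤ 2)]
  have hπ := Real.pi_pos
  -- facts about points in the interval
  have facts : ∀ x ∈ Set.Ioo (π / (2 * Real.sqrt 2)) (π / 2),
      0 < x ∧ x < π ∧ 0 < x * Real.sqrt 2 ∧ x * Real.sqrt 2 < π := by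
    intro x hx
    obtain ⟨hx1, hx2⟩ := hx
    have hx0 : 0 < x := lt_trans (by positivity) hx1
    refine ⟨hx0, by linarith, by positivity, ?_⟩
    calc x * Real.sqrt 2 < (π / 2) * Real.sqrt 2 := by
          exact mul_lt_mul_of_pos_right hx2 h2
      _ < (π / 2) * 2 := by
          exact mul_lt_mul_of_pos_left hlt2 (by linarith)
      _ = π := by ring
  -- derivative formula
  have hderiv : ∀ x ∈ Set.Ioo (π / (2 * Real.sqrt 2)) (π / 2),
      HasDerivAt (fun x => j (x * Real.sqrt 2) / j x)
        (((((1 - Real.cos (x * Real.sqrt 2)) / Real.sin (x * Real.sqrt 2) ^ 2 * Real.sqrt 2)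
            * j x - j (x * Real.sqrt 2) * ((1 - Real.cos x) / Real.sin x ^ 2)) / (j x) ^ 2)) x := by
    intro x hx
    obtain ⟨hx0, hxπ, hu0, huπ⟩ := facts x hx
    have hsx : Real.sin x ≠ 0 := (Real.sin_pos_of_pos_of_lt_pi hx0 hxπ).ne'
    have hsu : Real.sin (x * Real.sqrt 2) ≠ 0 :=
      (Real.sin_pos_of_pos_of_lt_pi hu0 huπ).ne'
    have hjx : j x ≠ 0 := (j_pos x hx0 hxπ).ne'
    have hmul : HasDerivAt (fun x : ℝ => x * Real.sqrt 2) (Real.sqrt 2) x := by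
      simpa using (hasDerivAt_id x).mul_const (Real.sqrt 2)
    have hcomp : HasDerivAt (fun x => j (x * Real.sqrt 2))
        ((1 - Real.cos (x * Real.sqrt 2)) / Real.sin (x * Real.sqrt 2) ^ 2 * Real.sqrt 2) x :=
      by have := (hasDerivAt_j (x * Real.sqrt 2) hsu).comp x hmul; exact this
    exact hcomp.div (hasDerivAt_j x hsx) hjx
  apply strictMonoOn_of_deriv_pos (convex_Ioo _ _)
  · intro x hx
    exact ((hderiv x hx).continuousAt).continuousWithinAt
  · intro x hx
    rw [interior_Ioo] at hx
    obtain ⟨hx0, hxπ, hu0, huπ⟩ := facts x hx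
    rw [(hderiv x hx).deriv]
    set u := x * Real.sqrt 2 with hu_def
    have hsx : 0 < Real.sin x := Real.sin_pos_of_pos_of_lt_pi hx0 hxπ
    have hsu : 0 < Real.sin u := Real.sin_pos_of_pos_of_lt_pi hu0 huπ
    have hcx : Real.cos x < 1 := by
      have := Real.cos_lt_cos_of_nonneg_of_le_pi (le_refl 0) hxπ.le hx0
      simpa using this
    have hcu : Real.cos u < 1 := by
      have := Real.cos_lt_cos_of_nonneg_of_le_pi (le_refl 0) huπ.le hu0
      simpa using this
    have hkey : Real.sin u < Real.sqrt 2 * Real.sin x := key_ineq x hx0 huπ.le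
    have hjx : 0 < j x := j_pos x hx0 hxπ
    have hnum : ((1 - Real.cos u) / Real.sin u ^ 2 * Real.sqrt 2) * j x
        - j u * ((1 - Real.cos x) / Real.sin x ^ 2)
        = (1 - Real.cos u) * (1 - Real.cos x) * (Real.sqrt 2 * Real.sin x - Real.sin u)
            / (Real.sin u ^ 2 * Real.sin x ^ 2) := by
      unfold j
      field_simp
    rw [hnum]
    have hA : 0 < 1 - Real.cos u := by linarith
    have hB : 0 < 1 - Real.cos x := by linarith
    have hC : 0 < Real.sqrt 2 * Real.sin x - Real.sin u := by linarith
    apply div_pos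
    · positivity
    · positivity
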